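/- (Validity of the sixth problem family Φ⁶) For every n ≥ 1, if A₁, …, A_{n+1}, B₁, …, B_n, C₁, …, C_n, D are pairwise distinct propositional atoms, then the sequent with premises ⋀_{i=1}^n B_i; ⋀_{i=1}^n ∘C_i; ⋀_{i=1}^n [(A_i ∨ B_i) → ∘A_{i+1}]; and (⋀_{i=1}^n C_i) → (D ∧ ¬C₁), and conclusion [⋁_{i=1}^n ∘(A_{i+1} → C_i)] ∨ D, is C1-valid: every C1-valuation assigning 1 to all four premises assigns 1 to the conclusion. Here ∘E abbreviates ¬(E ∧ ¬E). -/

import Mathlib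

/-- Formulas of the paraconsistent logic C1, built from propositional atoms
with the connectives ¬, ∧, ∨, →. -/
inductive C1Formula : Type
  | atom : ℕ → C1Formula
  | neg  : C1Formula → C1Formula
  | and  : C1Formula → C1Formula → C1Formula
  | or   : C1Formula → C1Formula → C1Formula
  | imp  : C1Formula → C1Formula → C1Formula
  deriving DecidableEq

namespace C1Formula

/-- The consistency connective: ∘A := ¬(A ∧ ¬A). -/
def cons (A : C1Formula) : C1Formula := neg (and A (neg A))

end C1Formula

/-- A C1 bivaluation: a function from formulas to {0,1} satisfying
da Costa's valuation clauses for C1. -/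
structure C1Valuation : Type where
  v : C1Formula → Fin 2
  and_iff : ∀ A B : C1Formula, v (A.and B) = 1 ↔ (v A = 1 ∧ v B = 1)
  or_iff  : ∀ A B : C1Formula, v (A.or B) = 1 ↔ (v A = 1 ∨ v B = 1)
  imp_iff : ∀ A B : C1Formula, v (A.imp B) = 1 ↔ (v A = 0 ∨ v B = 1)
  neg_val : ∀ A : C1Formula, v A.neg = 0 → v A = 1
  negneg_val : ∀ A : C1Formula, v A.neg.neg = 1 → v A = 1
  cons_val : ∀ A : C1Formula, v A.cons = 1 → (v A = 0 ∨ v A.neg = 0)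
  cons_and : ∀ A B : C1Formula, v (A.and B).cons = 0 → (v A.cons = 0 ∨ v B.cons = 0)
  cons_or  : ∀ A B : C1Formula, v (A.or B).cons = 0 → (v A.cons = 0 ∨ v B.cons = 0)
  cons_imp : ∀ A B : C1Formula, v (A.imp B).cons = 0 → (v A.cons = 0 ∨ v B.cons = 0)

/-- Γ ⊨_{C1} B : every C1-valuation assigning 1 to all members of Γ assigns 1 to B. -/
def C1Valid (Γ : Set C1Formula) (B : C1Formula) : Prop :=
  ∀ w : C1Valuation, (∀ A ∈ Γ, w.v A = 1) → w.v B = 1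

/-- Iterated conjunction ⋀_{i=1}^n f(i) (left-associated, meaningful for n ≥ 1). -/
def iterAnd (f : ℕ → C1Formula) : ℕ → C1Formula
  | 0 => f 0
  | 1 => f 1
  | n + 2 => (iterAnd f (n + 1)).and (f (n + 2))

/-- Iterated disjunction ⋁_{i=1}^n f(i) (left-associated, meaningful for n ≥ 1). -/
def iterOr (f : ℕ → C1Formula) : ℕ → C1Formula
  | 0 => f 0
  | 1 => f 1
  | n + 2 => (iterOr f (n + 1)).or (f (n + 2))

/-!
Only the first instance of each premise matters. From B₁ and (A₁ ∨ B₁) → ∘A₂ we get ∘A₂; with ∘C₁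
the C1 clause propagating consistency through → gives ∘(A₂ → C₁), the first disjunct of the
conclusion.
-/

namespace C1Valuation

variable (w : C1Valuation)

lemma eq_zero_of_ne_one {A : C1Formula} (h : w.v A ≠ 1) : w.v A = 0 := by
  omega

lemma eq_one_of_imp {A B : C1Formula} (hAB : w.v (A.imp B) = 1) (hA : w.v A = 1) : w.v B = 1 :=
  ((w.imp_iff A B).mp hAB).resolve_left (by rw [hA]; decide)

lemma cons_imp_of_cons {A B : C1Formula} (hA : w.v A.cons = 1) (hB : w.v B.cons = 1) :
    w.v (A.imp B).cons = 1 := by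
  by_contra h
  rcases w.cons_imp A B (w.eq_zero_of_ne_one h) with h' | h'
  · exact absurd (hA.symm.trans h') (by decide)
  · exact absurd (hB.symm.trans h') (by decide)

lemma iterAnd_eq_one_iff (f : ℕ → C1Formula) {n : ℕ} (hn : 1 ≤ n) :
    w.v (iterAnd f n) = 1 ↔ ∀ i ∈ Finset.Icc 1 n, w.v (f i) = 1 := by
  induction n, hn using Nat.le_induction with
  | base => simp [iterAnd]
  | succ m hm ih =>
    obtain ⟨k, rfl⟩ : ∃ k, m = k + 1 := ⟨m - 1, by omega⟩
    rw [iterAnd, w.and_iff, ih]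
    simp only [Finset.mem_Icc]
    constructor
    · rintro ⟨hlow, htop⟩ i ⟨h1, h2⟩
      rcases Nat.lt_or_ge i (k + 2) with hi | hi
      · exact hlow i ⟨h1, by omega⟩
      · rwa [show i = k + 2 by omega]
    · intro h
      exact ⟨fun i hi => h i ⟨hi.1, by omega⟩, h (k + 2) ⟨by omega, le_rfl⟩⟩

lemma iterOr_eq_one_iff (f : ℕ → C1Formula) {n : ℕ} (hn : 1 ≤ n) :
    w.v (iterOr f n) = 1 ↔ ∃ i ∈ Finset.Icc 1 n, w.v (f i) = 1 := by
  induction n, hn using Nat.le_induction with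
  | base => simp [iterOr]
  | succ m hm ih =>
    obtain ⟨k, rfl⟩ : ∃ k, m = k + 1 := ⟨m - 1, by omega⟩
    rw [iterOr, w.or_iff, ih]
    simp only [Finset.mem_Icc]
    constructor
    · rintro (⟨i, ⟨h1, h2⟩, hi⟩ | htop)
      · exact ⟨i, ⟨h1, by omega⟩, hi⟩
      · exact ⟨k + 2, ⟨by omega, le_rfl⟩, htop⟩
    · rintro ⟨i, ⟨h1, h2⟩, hi⟩
      rcases Nat.lt_or_ge i (k + 2) with hlt | hge
      · exact Or.inl ⟨i, ⟨h1, by omega⟩, hi⟩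
      · rw [show i = k + 2 by omega] at hi
        exact Or.inr hi

end C1Valuation

theorem sixth_family_valid_general (n : ℕ) (hn : 1 ≤ n) (A B C : ℕ → ℕ) (D : ℕ)
    (w : C1Valuation)
    (hP1 : w.v (iterAnd (fun i => C1Formula.atom (B i)) n) = 1)
    (hP2 : w.v (iterAnd (fun i => (C1Formula.atom (C i)).cons) n) = 1)
    (hP3 : w.v (iterAnd (fun i =>
        ((C1Formula.atom (A i)).or (C1Formula.atom (B i))).imp
          ((C1Formula.atom (A (i + 1))).cons)) n) = 1) :
    w.v ((iterOr (fun i =>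
        ((C1Formula.atom (A (i + 1))).imp (C1Formula.atom (C i))).cons) n).or
        (C1Formula.atom D)) = 1 := by
  have h1 : 1 ∈ Finset.Icc 1 n := Finset.mem_Icc.mpr ⟨le_rfl, hn⟩
  have hB1 := (w.iterAnd_eq_one_iff _ hn).mp hP1 1 h1
  have hC1 := (w.iterAnd_eq_one_iff _ hn).mp hP2 1 h1
  have hA2 : w.v (C1Formula.atom (A 2)).cons = 1 :=
    w.eq_one_of_imp ((w.iterAnd_eq_one_iff _ hn).mp hP3 1 h1) ((w.or_iff _ _).mpr (Or.inr hB1))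
  refine (w.or_iff _ _).mpr (Or.inl ((w.iterOr_eq_one_iff _ hn).mpr ⟨1, h1, ?_⟩))
  exact w.cons_imp_of_cons hA2 hC1

/-- Validity of the sixth problem family Φ⁶: for every n ≥ 1 and pairwise
distinct atoms A₁, …, A_{n+1}, B₁, …, B_n, C₁, …, C_n, D, the sequent
⋀_{i=1}^n B_i, ⋀_{i=1}^n ∘C_i, ⋀_{i=1}^n [(A_i ∨ B_i) → ∘A_{i+1}],
(⋀_{i=1}^n C_i) → (D ∧ ¬C₁) ⊢ [⋁_{i=1}^n ∘(A_{i+1} → C_i)] ∨ D is C1-valid. -/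
theorem sixth_family_valid (n : ℕ) (hn : 1 ≤ n) (A B C : ℕ → ℕ) (D : ℕ)
    (hA : ∀ i ∈ Finset.Icc 1 (n + 1), ∀ j ∈ Finset.Icc 1 (n + 1), i ≠ j → A i ≠ A j)
    (hB : ∀ i ∈ Finset.Icc 1 n, ∀ j ∈ Finset.Icc 1 n, i ≠ j → B i ≠ B j)
    (hC : ∀ i ∈ Finset.Icc 1 n, ∀ j ∈ Finset.Icc 1 n, i ≠ j → C i ≠ C j)
    (hAB : ∀ i ∈ Finset.Icc 1 (n + 1), ∀ j ∈ Finset.Icc 1 n, A i ≠ B j)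
    (hAC : ∀ i ∈ Finset.Icc 1 (n + 1), ∀ j ∈ Finset.Icc 1 n, A i ≠ C j)
    (hBC : ∀ i ∈ Finset.Icc 1 n, ∀ j ∈ Finset.Icc 1 n, B i ≠ C j)
    (hAD : ∀ i ∈ Finset.Icc 1 (n + 1), A i ≠ D)
    (hBD : ∀ i ∈ Finset.Icc 1 n, B i ≠ D)
    (hCD : ∀ i ∈ Finset.Icc 1 n, C i ≠ D)
    (w : C1Valuation)
    (hP1 : w.v (iterAnd (fun i => C1Formula.atom (B i)) n) = 1)
    (hP2 : w.v (iterAnd (fun i => (C1Formula.atom (C i)).cons) n) = 1)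
    (hP3 : w.v (iterAnd (fun i =>
        ((C1Formula.atom (A i)).or (C1Formula.atom (B i))).imp
          ((C1Formula.atom (A (i + 1))).cons)) n) = 1)
    (hP4 : w.v ((iterAnd (fun i => C1Formula.atom (C i)) n).imp
        ((C1Formula.atom D).and ((C1Formula.atom (C 1)).neg))) = 1) :
    w.v ((iterOr (fun i =>
        ((C1Formula.atom (A (i + 1))).imp (C1Formula.atom (C i))).cons) n).or
        (C1Formula.atom D)) = 1 :=
  sixth_family_valid_general n hn A B C D w hP1 hP2 hP3
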